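/- Deterministic version of the slope-variance inequality: for positive reals σ_j² and reals y_j with ∑_j y_j = 0, not all y_j zero, one has (∑_j y_j² σ_j²)/(∑_j y_j²)² ≥ (∑_j 1/σ_j²)/[(∑_j 1/σ_j²)(∑_j y_j²/σ_j²) − (∑_j y_j/σ_j²)²]. -/

import Mathlib

/-!
Write `R = ∑ 1/σ²`, `L = ∑ y/σ²`, `Q = ∑ y²/σ²`, `S = ∑ y²`, `A = ∑ y²σ²` and `D = RQ - L²`.
Since `∑ y = 0`, `R S = ∑ y (R y - L)`, and Cauchy–Schwarz with the weights `σ²` bounds its square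
by `A · ∑ (R y - L)²/σ² = A · R D`. Dividing by `R` gives `R S² ≤ A D`, which is the claim.
-/

open Finset

variable {ι : Type*} [Fintype ι]

theorem sq_sum_mul_le_sum_sq_mul_mul_sum_sq_div (u v σ : ι → ℝ) (hσ : ∀ j, 0 < σ j) :
    (∑ j, u j * v j) ^ 2 ≤ (∑ j, u j ^ 2 * σ j) * ∑ j, v j ^ 2 / σ j :=
  sum_sq_le_sum_mul_sum_of_sq_le_mul univ
    (fun j _ => by have := hσ j; positivity) (fun j _ => by have := hσ j; positivity)
    fun j _ => by
      have := (hσ j).ne'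
      exact (by field_simp : _ = _).le

theorem sum_sq_mul_sub_div (y σ : ι → ℝ) (a b : ℝ) :
    ∑ j, (a * y j - b) ^ 2 / σ j
      = a ^ 2 * ∑ j, y j ^ 2 / σ j - 2 * a * b * ∑ j, y j / σ j + b ^ 2 * ∑ j, 1 / σ j := by
  simp only [mul_sum, ← sum_sub_distrib, ← sum_add_distrib]
  congr 1 with j
  ring

theorem sum_inv_mul_sq_sum_sq_le (y σ : ι → ℝ) [Nonempty ι] (hσ : ∀ j, 0 < σ j)
    (hy : ∑ j, y j = 0) :
    (∑ j, 1 / σ j) * (∑ j, y j ^ 2) ^ 2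
      ≤ (∑ j, y j ^ 2 * σ j)
        * ((∑ j, 1 / σ j) * (∑ j, y j ^ 2 / σ j) - (∑ j, y j / σ j) ^ 2) := by
  set R := ∑ j, 1 / σ j
  set L := ∑ j, y j / σ j
  have hR : 0 < R := sum_pos (fun j _ => one_div_pos.2 (hσ j)) univ_nonempty
  have hRS : ∑ j, y j * (R * y j - L) = R * ∑ j, y j ^ 2 := by
    simp only [mul_sub, sum_sub_distrib, ← sum_mul, hy, zero_mul, sub_zero, mul_sum]
    congr 1 with j
    ring
  have hcs := sq_sum_mul_le_sum_sq_mul_mul_sum_sq_div y (fun j => R * y j - L) σ hσ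
  rw [hRS, sum_sq_mul_sub_div] at hcs
  refine le_of_mul_le_mul_left ?_ hR
  linear_combination hcs

theorem slope_variance_inequality_deterministic_general
    (N : ℕ) (y σ2 : Fin N → ℝ) (hσ : ∀ j, 0 < σ2 j)
    (hy0 : ∑ j, y j = 0)
    (hDpos : 0 < (∑ j, 1 / σ2 j) * (∑ j, y j ^ 2 / σ2 j) - (∑ j, y j / σ2 j) ^ 2) :
    (∑ j, y j ^ 2 * σ2 j) / (∑ j, y j ^ 2) ^ 2
      ≥ (∑ j, 1 / σ2 j)
        / ((∑ j, 1 / σ2 j) * (∑ j, y j ^ 2 / σ2 j) - (∑ j, y j / σ2 j) ^ 2) := by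
  have hQ : ∑ j, y j ^ 2 / σ2 j ≠ 0 := fun h => by
    rw [h, mul_zero] at hDpos
    nlinarith [sq_nonneg (∑ j, y j / σ2 j)]
  obtain ⟨j₀, -, hj₀⟩ := exists_ne_zero_of_sum_ne_zero hQ
  have hyj₀ : y j₀ ≠ 0 := pow_ne_zero_iff two_ne_zero |>.1 (div_ne_zero_iff.1 hj₀).1
  have : Nonempty (Fin N) := ⟨j₀⟩
  have hS : 0 < ∑ j, y j ^ 2 :=
    sum_pos' (fun j _ => sq_nonneg _) ⟨j₀, mem_univ _, by positivity⟩
  rw [ge_iff_le, div_le_div_iff₀ hDpos (by positivity)]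
  exact sum_inv_mul_sq_sum_sq_le y σ2 hσ hy0

theorem slope_variance_inequality_deterministic
    (N : ℕ) (y σ2 : Fin N → ℝ) (hσ : ∀ j, 0 < σ2 j)
    (hy0 : ∑ j, y j = 0) (hyne : ∃ j, y j ≠ 0)
    (hDpos : 0 < (∑ j, 1 / σ2 j) * (∑ j, y j ^ 2 / σ2 j) - (∑ j, y j / σ2 j) ^ 2) :
    (∑ j, y j ^ 2 * σ2 j) / (∑ j, y j ^ 2) ^ 2
      ≥ (∑ j, 1 / σ2 j)
        / ((∑ j, 1 / σ2 j) * (∑ j, y j ^ 2 / σ2 j) - (∑ j, y j / σ2 j) ^ 2) :=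
  slope_variance_inequality_deterministic_general N y σ2 hσ hy0 hDpos
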